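/- In the execution of Algorithm lineon on any request sequence R, with Δ ≥ 2, every horizontal edge of Triangle's solution H^T lies in the payer of at most 6·log₂ n bins; consequently Σ_{(I,i)∈BIN} |horbin(I,i)| ≤ 6·log₂ n·|H^T|. -/

import Mathlib

open Finset

/-! ## The time-line grid of a line network -/

/-- Grid edges of the time-line graph of the line network:
`h v t` is the undirected horizontal edge `{(v,t),(v+1,t)}`,
`a v t` is the arc `((v,t),(v,t+1))` directed forward in time. -/
inductive GEdge : Type
  | h (v t : ℕ) : GEdge
  | a (v t : ℕ) : GEdge
deriving DecidableEq

/-- Distance between two nodes of the line network. -/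
def natdist (a b : ℕ) : ℕ := max a b - min a b

/-- The (replica) endpoints of a grid edge. -/
def eVerts : GEdge → Finset (ℕ × ℕ)
  | .h v t => {(v, t), (v + 1, t)}
  | .a v t => {(v, t), (v, t + 1)}

/-- The replicas that are endpoints of edges of `F`. -/
def verts (F : Finset GEdge) : Finset (ℕ × ℕ) := F.biUnion eVerts

/-- The edge lies inside the grid of the line network `L(n)` (nodes `1,…,n`). -/
def eInGrid (n : ℕ) : GEdge → Prop
  | .h v _ => 1 ≤ v ∧ v + 1 ≤ n
  | .a v _ => 1 ≤ v ∧ v ≤ n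

/-- The distance `d((u,s),(v,t)) = (t-s) + |v-u|` if `s ≤ t`, and `∞` otherwise. -/
def gdist (p q : ℕ × ℕ) : WithTop ℕ :=
  if p.2 ≤ q.2 then ((q.2 - p.2 + natdist p.1 q.1 : ℕ) : WithTop ℕ) else ⊤

/-- One step of a path in a solution: horizontal edges may be traversed in both
directions, arcs only forward in time. -/
inductive GStep (F : Finset GEdge) : ℕ × ℕ → ℕ × ℕ → Prop
  | right {v t : ℕ} : GEdge.h v t ∈ F → GStep F (v, t) (v + 1, t)
  | left {v t : ℕ} : GEdge.h v t ∈ F → GStep F (v + 1, t) (v, t)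
  | up {v t : ℕ} : GEdge.a v t ∈ F → GStep F (v, t) (v, t + 1)

/-- `q` is reachable from `p` in the edge set `F`. -/
def Reaches (F : Finset GEdge) (p q : ℕ × ℕ) : Prop := Relation.ReflTransGen (GStep F) p q

/-- A feasible MCD solution: a set of grid edges spanning all requests from the
origin replica `(r0, 0)`. -/
def Feasible (n r0 : ℕ) (R : List (ℕ × ℕ)) (F : Finset GEdge) : Prop :=
  (∀ e ∈ F, eInGrid n e) ∧ ∀ r ∈ R, Reaches F (r0, 0) r

/-- `|OPT|`, the cost of a minimum-cost feasible solution. -/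
noncomputable def optCost (n r0 : ℕ) (R : List (ℕ × ℕ)) : ℕ :=
  sInf {c : ℕ | ∃ F : Finset GEdge, Feasible n r0 R F ∧ F.card = c}

/-- A valid MCD instance on `L(n)`: the origin and all requested nodes are in
`{1,…,n}` and the request times are nondecreasing. -/
def ValidInstance (n r0 : ℕ) (R : List (ℕ × ℕ)) : Prop :=
  1 ≤ r0 ∧ r0 ≤ n ∧ (∀ r ∈ R, 1 ≤ r.1 ∧ r.1 ≤ n) ∧ List.Chain' (· ≤ ·) (R.map Prod.snd)

/-- The time `t_N` of the last request. -/
def lastT (R : List (ℕ × ℕ)) : ℕ := (R.map Prod.snd).foldr max 0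

/-! ## The offline algorithm Triangle of Charikar, Halperin and Motwani -/

/-- The `i`-th request (junk value `(0,0)` out of range). -/
def req (R : List (ℕ × ℕ)) (i : ℕ) : ℕ × ℕ := R.getD i (0, 0)

/-- The radius `ρ^T_i = d(q_i, r_i)` of the `i`-th request, where `q_i = serve i`
is its serving replica. -/
def triRho (R : List (ℕ × ℕ)) (serve : ℕ → ℕ × ℕ) (i : ℕ) : ℕ :=
  ((req R i).2 - (serve i).2) + natdist (serve i).1 (req R i).1

/-- `Base(i)`: the replicas `(v, t_i)` with `|v - v_i| ≤ ρ^T_i`. -/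
def triBase (n : ℕ) (R : List (ℕ × ℕ)) (serve : ℕ → ℕ × ℕ) (i : ℕ) : Finset (ℕ × ℕ) :=
  ((Finset.Icc 1 n).filter fun v => natdist v (req R i).1 ≤ triRho R serve i).image
    fun v => (v, (req R i).2)

/-- `Base_H(i)`: the horizontal edges joining consecutive replicas of `Base(i)`. -/
def triBaseH (n : ℕ) (R : List (ℕ × ℕ)) (serve : ℕ → ℕ × ℕ) (i : ℕ) : Finset GEdge :=
  ((Finset.Icc 1 n).filter fun v =>
      v + 1 ≤ n ∧ natdist v (req R i).1 ≤ triRho R serve i ∧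
        natdist (v + 1) (req R i).1 ≤ triRho R serve i).image
    fun v => GEdge.h v (req R i).2

/-- The arcs of the vertical path from the serving replica `(u_i, s_i)` to `(u_i, t_i)`
added at step (T3). -/
def triAddA (R : List (ℕ × ℕ)) (serve : ℕ → ℕ × ℕ) (i : ℕ) : Finset GEdge :=
  (Finset.Ico (serve i).2 (req R i).2).image fun τ => GEdge.a (serve i).1 τ

/-- Triangle's solution after handling the first `i` requests. -/
def triSol (R : List (ℕ × ℕ)) (serve : ℕ → ℕ × ℕ) (addH : ℕ → Finset GEdge)
    (i : ℕ) : Finset GEdge :=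
  (Finset.range i).biUnion fun j => triAddA R serve j ∪ addH j

/-- The replicas of Triangle's solution after handling the first `i` requests
(initially only the origin replica `(r0,0)`). -/
def triReps (r0 : ℕ) (R : List (ℕ × ℕ)) (serve : ℕ → ℕ × ℕ) (addH : ℕ → Finset GEdge)
    (i : ℕ) : Finset (ℕ × ℕ) :=
  insert (r0, 0) (verts (triSol R serve addH i))

/-- An execution of Algorithm Triangle on the instance `(n, r0, R)`:
`serve i` is the serving replica `q_i = (u_i, s_i)` of request `r_i` (step (T1)),
chosen in the current solution at minimum distance from `r_i`;
`addH i` is the set of horizontal edges added at step (T4), namely all of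
`Base_H(i)` except possibly one edge (the one closing a cycle). -/
structure TriangleExec (n r0 : ℕ) (R : List (ℕ × ℕ)) where
  serve : ℕ → ℕ × ℕ
  addH : ℕ → Finset GEdge
  serve_mem : ∀ i < R.length, serve i ∈ triReps r0 R serve addH i
  serve_time : ∀ i < R.length, (serve i).2 ≤ (req R i).2
  serve_min : ∀ i < R.length, ∀ q ∈ triReps r0 R serve addH i,
      gdist (serve i) (req R i) ≤ gdist q (req R i)
  addH_spec : ∀ i < R.length, ∃ E : Finset GEdge,
      E.card ≤ 1 ∧ addH i = triBaseH n R serve i \ E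
  base_conn : ∀ i < R.length, ∀ p ∈ triBase n R serve i,
      Reaches (triSol R serve addH (i + 1)) (r0, 0) p
  addH_tail : ∀ i, R.length ≤ i → addH i = ∅

/-- `H^T`: the horizontal edges of Triangle's final solution. -/
def triHT (R : List (ℕ × ℕ)) (addH : ℕ → Finset GEdge) : Finset GEdge :=
  (Finset.range R.length).biUnion addH

/-- `A^T`: the arcs of Triangle's final solution. -/
def triAT (R : List (ℕ × ℕ)) (serve : ℕ → ℕ × ℕ) : Finset GEdge :=
  (Finset.range R.length).biUnion (triAddA R serve)

/-- `Base = ∪ᵢ Base(i)`: all base replicas. -/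
def triBaseAll (n : ℕ) (R : List (ℕ × ℕ)) (serve : ℕ → ℕ × ℕ) : Finset (ℕ × ℕ) :=
  (Finset.range R.length).biUnion (triBase n R serve)

/-! ## Algorithm lineon -/

/-- An interval of the hierarchical partition, encoded as `(level, index)`:
`(l, j)` denotes `I^l_j = {Δ(j-1)·2^l + 1, …, Δ·j·2^l}`. -/
abbrev Ivl := ℕ × ℕ

/-- The nodes of the interval `I = (l, j)`. -/
def ivlNodes (Δ : ℕ) (I : Ivl) : Finset ℕ :=
  Finset.Icc (Δ * (I.2 - 1) * 2 ^ I.1 + 1) (Δ * I.2 * 2 ^ I.1)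

/-- `I = (l, j)` is a genuine interval of the partition of `{1,…,n}`,
where `n = Δ · 2^k`: its level is at most `log₂ m = k` and
`1 ≤ j ≤ m / 2^l = 2^(k-l)`. -/
def validIvl (Δ k : ℕ) (I : Ivl) : Prop :=
  I.1 ≤ k ∧ 1 ≤ I.2 ∧ I.2 ≤ 2 ^ (k - I.1)

/-- The nodes of the neighborhood `N(I) = NL(I) ∪ I ∪ NR(I)` of interval `I`. -/
def nbhdNodes (n Δ : ℕ) (I : Ivl) : Finset ℕ :=
  Finset.Icc (Δ * (I.2 - 2) * 2 ^ I.1 + 1) (min n (Δ * (I.2 + 1) * 2 ^ I.1))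

/-- The nodes having a base replica at time `t` (`Base[t]`, as nodes). -/
def baseNodesAt (n : ℕ) (R : List (ℕ × ℕ)) (serve : ℕ → ℕ × ℕ) (t : ℕ) : Finset ℕ :=
  ((triBaseAll n R serve).filter fun p => p.2 = t).image Prod.fst

/-- `I` is active at time `t`: `Base ∩ I[t - 2^{l(I)}, t] ≠ ∅`. -/
def activeAt (n Δ : ℕ) (R : List (ℕ × ℕ)) (serve : ℕ → ℕ × ℕ) (I : Ivl) (t : ℕ) : Prop :=
  ∃ p ∈ triBaseAll n R serve, p.1 ∈ ivlNodes Δ I ∧ p.2 ≤ t ∧ t ≤ p.2 + 2 ^ I.1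

/-- `I` is stay-active at time `t`: `Base ∩ I[t - 2^{l(I)} + 1, t] ≠ ∅`. -/
def stayActiveAt (n Δ : ℕ) (R : List (ℕ × ℕ)) (serve : ℕ → ℕ × ℕ) (I : Ivl) (t : ℕ) : Prop :=
  ∃ p ∈ triBaseAll n R serve, p.1 ∈ ivlNodes Δ I ∧ p.2 ≤ t ∧ t < p.2 + 2 ^ I.1

/-- `C_t`: the nodes storing a copy at time `t`.  `C_0 = {r0}`, and `C_{t+1}`
consists of the origin together with the nodes selected (by `sel`) for the
commitments made at time `t` (listed, in processing order, in `commitList t`). -/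
def lineC (r0 : ℕ) (commitList : ℕ → List Ivl) (sel : ℕ → Ivl → ℕ) : ℕ → Finset ℕ
  | 0 => {r0}
  | t + 1 => insert r0 ((commitList t).map (sel t)).toFinset

/-- The nodes to which the delivery phase for request `r_j` delivers a copy:
the horizontal path from `q^on_j` to `r_j` together with the nodes of `Base(j)`. -/
def servedNodes (n : ℕ) (R : List (ℕ × ℕ)) (serve : ℕ → ℕ × ℕ) (qon : ℕ → ℕ)
    (j : ℕ) : Finset ℕ :=
  Finset.Icc (min (qon j) (req R j).1) (max (qon j) (req R j).1) ∪
    (triBase n R serve j).image Prod.fst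

/-- The nodes whose time-`t_i` replica is in lineon's solution when request `r_i`
arrives: the caches `C_{t_i}` together with everything delivered for earlier
requests of the same time. -/
def availNodes (n r0 : ℕ) (R : List (ℕ × ℕ)) (serve : ℕ → ℕ × ℕ)
    (commitList : ℕ → List Ivl) (sel : ℕ → Ivl → ℕ) (qon : ℕ → ℕ) (i : ℕ) : Finset ℕ :=
  lineC r0 commitList sel (req R i).2 ∪
    (Finset.range i).biUnion fun j =>
      if (req R j).2 = (req R i).2 then servedNodes n R serve qon j else ∅

/-- An execution of Algorithm lineon with parameter `Δ` (where `n = Δ · 2^k`) on the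
instance `(n, r0, R)`.  It simulates Triangle (`tri`); `commitList t` is the list of
intervals committing at time `t`, in the order processed by the storage phase
(levels in increasing order); `sel t I` is the node selected for the commitment
`⟨I,t⟩` in step (S1.2); `qon i` is the node of the serving replica `q^on_i` of
request `r_i` chosen in the delivery phase (step (D1)). -/
structure LineonExec (n Δ k r0 : ℕ) (R : List (ℕ × ℕ)) where
  tri : TriangleExec n r0 R
  hn : n = Δ * 2 ^ k
  commitList : ℕ → List Ivl
  sel : ℕ → Ivl → ℕ
  qon : ℕ → ℕ
  commit_valid : ∀ t, ∀ I ∈ commitList t, validIvl Δ k I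
  commit_nodup : ∀ t, (commitList t).Nodup
  commit_sorted : ∀ t, ((commitList t).map Prod.fst).Pairwise (· ≤ ·)
  commit_stay : ∀ t, ∀ I ∈ commitList t, stayActiveAt n Δ R tri.serve I t
  commit_fresh : ∀ t l₁ I l₂, commitList t = l₁ ++ I :: l₂ →
      ∀ v ∈ nbhdNodes n Δ I, v ≠ r0 ∧ v ∉ l₁.map (sel t)
  commit_tail : ∀ t, lastT R < t → commitList t = []
  sel_nbhd : ∀ t, ∀ I ∈ commitList t, sel t I ∈ nbhdNodes n Δ I
  sel_src : ∀ t, ∀ I ∈ commitList t,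
      sel t I ∈ baseNodesAt n R tri.serve t ∨ sel t I ∈ lineC r0 commitList sel t
  loop_done : ∀ t ≤ lastT R, ∀ I, validIvl Δ k I → stayActiveAt n Δ R tri.serve I t →
      ∃ v ∈ nbhdNodes n Δ I, v ∈ lineC r0 commitList sel (t + 1)
  qon_mem : ∀ i < R.length, qon i ∈ availNodes n r0 R tri.serve commitList sel qon i
  qon_min : ∀ i < R.length, ∀ w ∈ availNodes n r0 R tri.serve commitList sel qon i,
      natdist (qon i) (req R i).1 ≤ natdist w (req R i).1

/-- The online radius `ρ^on_i = d(q^on_i, r_i)`. -/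
def lineRon (R : List (ℕ × ℕ)) (qon : ℕ → ℕ) (i : ℕ) : ℕ := natdist (qon i) (req R i).1

/-- `H^on`: the horizontal edges of lineon's final solution. -/
def lineHon (n : ℕ) (R : List (ℕ × ℕ)) (serve : ℕ → ℕ × ℕ) (qon : ℕ → ℕ) : Finset GEdge :=
  (Finset.range R.length).biUnion fun i =>
    (Finset.Ico (min (qon i) (req R i).1) (max (qon i) (req R i).1)).image
        (fun v => GEdge.h v (req R i).2) ∪
      triBaseH n R serve i

/-- `A^on`: the arcs of lineon's final solution, i.e. the arcs `((v,t),(v,t+1))`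
with `(v,t+1) ∈ C_{t+1}`. -/
def lineAon (r0 : ℕ) (R : List (ℕ × ℕ)) (commitList : ℕ → List Ivl)
    (sel : ℕ → Ivl → ℕ) : Finset GEdge :=
  (Finset.range (lastT R)).biUnion fun t =>
    (lineC r0 commitList sel (t + 1)).image fun v => GEdge.a v t

/-- `COMMIT`, as a finite set of pairs `⟨I, t⟩`. -/
def commitSet (R : List (ℕ × ℕ)) (commitList : ℕ → List Ivl) : Finset (Ivl × ℕ) :=
  (Finset.range (lastT R + 1)).biUnion fun t =>
    (commitList t).toFinset.image fun I => (I, t)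

/-! ## Sessions and bins -/

open scoped Classical in
/-- The times at which interval `I` contains a base replica. -/
noncomputable def baseTimes (n Δ : ℕ) (R : List (ℕ × ℕ)) (serve : ℕ → ℕ × ℕ)
    (I : Ivl) : Finset ℕ :=
  ((triBaseAll n R serve).filter fun p => p.1 ∈ ivlNodes Δ I).image Prod.snd

/-- `t⁻`: the last time before `t` at which `I` contains a base replica. -/
noncomputable def tminus (n Δ : ℕ) (R : List (ℕ × ℕ)) (serve : ℕ → ℕ × ℕ)
    (I : Ivl) (t : ℕ) : ℕ :=
  ((baseTimes n Δ R serve I).filter fun τ => τ < t).sup id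

/-- `t⁺`: the first time after `s` at which `I` contains a base replica
(`⊤` if there is none). -/
noncomputable def tplusE (n Δ : ℕ) (R : List (ℕ × ℕ)) (serve : ℕ → ℕ × ℕ)
    (I : Ivl) (s : ℕ) : WithTop ℕ :=
  ((baseTimes n Δ R serve I).filter fun τ => s < τ).min

/-- `t⁺` as a natural number (junk value `0` if there is no later base time). -/
noncomputable def tplusN (n Δ : ℕ) (R : List (ℕ × ℕ)) (serve : ℕ → ℕ × ℕ)
    (I : Ivl) (s : ℕ) : ℕ :=
  WithTop.untopD 0 (tplusE n Δ R serve I s)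

/-- The end `t⁺_0` of the first (uncommitted) session of `I`: the first time at
which `I` contains a base replica. -/
noncomputable def firstBase (n Δ : ℕ) (R : List (ℕ × ℕ)) (serve : ℕ → ℕ × ℕ)
    (I : Ivl) : ℕ :=
  WithTop.untopD 0 (baseTimes n Δ R serve I).min

/-- `BIN`: a bin is a pair of a committed interval `I` of positive level and (the
start `t⁻` of) one of its committed sessions. -/
noncomputable def lineBins (n Δ : ℕ) (R : List (ℕ × ℕ)) (serve : ℕ → ℕ × ℕ)
    (commitList : ℕ → List Ivl) : Finset (Ivl × ℕ) :=
  ((commitSet R commitList).filter fun p => 0 < p.1.1).image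
    fun p => (p.1, tminus n Δ R serve p.1 p.2)

/-- The bin `b = (I, t⁻)` is the last committed session of `I`. -/
def isLastBin (n Δ : ℕ) (R : List (ℕ × ℕ)) (serve : ℕ → ℕ × ℕ)
    (commitList : ℕ → List Ivl) (b : Ivl × ℕ) : Prop :=
  ∀ b' ∈ lineBins n Δ R serve commitList, b'.1 = b.1 → b'.2 ≤ b.2

open scoped Classical in
/-- The payer of bin `b = (I, t⁻)`: the rectangle `N(I)[t⁻, t⁺]`, except that the
last committed session of `I` is paid by the rectangle `N(I)[0, t⁺_0]` of the
first (uncommitted) session of `I`. -/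
noncomputable def payer (n Δ : ℕ) (R : List (ℕ × ℕ)) (serve : ℕ → ℕ × ℕ)
    (commitList : ℕ → List Ivl) (b : Ivl × ℕ) : Finset (ℕ × ℕ) :=
  if isLastBin n Δ R serve commitList b then
    nbhdNodes n Δ b.1 ×ˢ Finset.Icc 0 (firstBase n Δ R serve b.1)
  else nbhdNodes n Δ b.1 ×ˢ Finset.Icc b.2 (tplusN n Δ R serve b.1 b.2)

open scoped Classical in
/-- `combin(b)`: the commitments of `I` belonging to the session of bin `b`. -/
noncomputable def combin (n Δ : ℕ) (R : List (ℕ × ℕ)) (serve : ℕ → ℕ × ℕ)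
    (commitList : ℕ → List Ivl) (b : Ivl × ℕ) : Finset (Ivl × ℕ) :=
  (commitSet R commitList).filter fun p =>
    p.1 = b.1 ∧ tminus n Δ R serve p.1 p.2 = b.2

open scoped Classical in
/-- `horbin(b)`: the horizontal edges of `H^T` with both endpoints in `b`'s payer. -/
noncomputable def horbin (n Δ : ℕ) (R : List (ℕ × ℕ)) (serve : ℕ → ℕ × ℕ)
    (addH : ℕ → Finset GEdge) (commitList : ℕ → List Ivl) (b : Ivl × ℕ) : Finset GEdge :=
  (triHT R addH).filter fun e => eVerts e ⊆ payer n Δ R serve commitList b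

open scoped Classical in
/-- `arcbin(b)`: the arcs `((v,t),(v,t+1))` of `A^T` lying in `b`'s payer such that
`b`'s interval commits at time `t`. -/
noncomputable def arcbin (n Δ : ℕ) (R : List (ℕ × ℕ)) (serve : ℕ → ℕ × ℕ)
    (commitList : ℕ → List Ivl) (b : Ivl × ℕ) : Finset GEdge :=
  (triAT R serve).filter fun e =>
    eVerts e ⊆ payer n Δ R serve commitList b ∧
      ∃ v t, e = GEdge.a v t ∧ (b.1, t) ∈ commitSet R commitList

/-! ### Auxiliary lemmas -/

section AuxOrder

private lemma untop'_le_of_le {x : WithTop ℕ} {m : ℕ} (h : x ≤ (m : WithTop ℕ)) :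
    WithTop.untopD 0 x ≤ m := by
  cases x using WithTop.recTopCoe with
  | top => simp at h
  | coe y => exact (show y ≤ m by simpa using h)

lemma tminus_mem_baseTimes {n Δ : ℕ} {R : List (ℕ × ℕ)} {serve : ℕ → ℕ × ℕ} {I : Ivl} {τ : ℕ}
    (h : tminus n Δ R serve I τ ≠ 0) :
    tminus n Δ R serve I τ ∈ baseTimes n Δ R serve I ∧ tminus n Δ R serve I τ < τ := by
  classical
  by_cases hF : ((baseTimes n Δ R serve I).filter fun τ' => τ' < τ).Nonempty
  · obtain ⟨b, hb, he⟩ := Finset.exists_mem_eq_sup _ hF id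
    have hb' := Finset.mem_filter.1 hb
    unfold tminus at h ⊢
    rw [he]
    exact ⟨hb'.1, hb'.2⟩
  · exfalso
    apply h
    unfold tminus
    rw [Finset.not_nonempty_iff_eq_empty.1 hF]
    simp

lemma tplusN_le_of_base {n Δ : ℕ} {R : List (ℕ × ℕ)} {serve : ℕ → ℕ × ℕ} {I : Ivl} {s s' : ℕ}
    (h : s' ∈ baseTimes n Δ R serve I) (hs : s < s') :
    tplusN n Δ R serve I s ≤ s' := by
  have : tplusE n Δ R serve I s ≤ (s' : WithTop ℕ) := by
    apply Finset.min_le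
    exact Finset.mem_filter.2 ⟨h, hs⟩
  exact untop'_le_of_le this

lemma firstBase_le_of_base {n Δ : ℕ} {R : List (ℕ × ℕ)} {serve : ℕ → ℕ × ℕ} {I : Ivl} {s : ℕ}
    (h : s ∈ baseTimes n Δ R serve I) :
    firstBase n Δ R serve I ≤ s :=
  untop'_le_of_le (Finset.min_le h)

lemma firstBase_mem {n Δ : ℕ} {R : List (ℕ × ℕ)} {serve : ℕ → ℕ × ℕ} {I : Ivl}
    (h : (baseTimes n Δ R serve I).Nonempty) :
    firstBase n Δ R serve I ∈ baseTimes n Δ R serve I := by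
  unfold firstBase
  rw [← (baseTimes n Δ R serve I).coe_min' h]
  exact Finset.min'_mem _ h

end AuxOrder

section AuxGeom

private lemma sigma_lin {D m s q r r' A A' : ℕ} (hD : 0 < D) (hm : 0 < m)
    (hs2 : s ≤ 2) (eA : A = D * s + r) (eA' : A' = (D * m) * s + r')
    (er' : r' = D * q + r) (hqm : q + 1 ≤ m) :
    A ≤ A' ∧ A' + 3 * D ≤ A + 3 * (D * m) := by
  constructor
  · have h1 : D * s ≤ (D * m) * s := by
      apply Nat.mul_le_mul_right
      exact Nat.le_mul_of_pos_right D hm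
    omega
  · have key : m * s + q + 3 ≤ s + 3 * m := by
      zify
      nlinarith [mul_nonneg (by push_cast; omega : (0:ℤ) ≤ 2 - (s:ℤ))
        (by push_cast; omega : (0:ℤ) ≤ (m:ℤ) - 1)]
    have key2 : D * (m * s + q + 3) ≤ D * (s + 3 * m) := Nat.mul_le_mul_left D key
    have e1 : D * (m * s + q + 3) = (D * m) * s + D * q + 3 * D := by ring
    have e2 : D * (s + 3 * m) = D * s + 3 * (D * m) := by ring
    omega

private lemma sigma_core {D D' A A' : ℕ} (hD : 0 < D) (hD' : 0 < D') (hdvd : D ∣ D')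
    (hmod : A % D = A' % D) (hdiv : A / D = A' / D') (hs2 : A / D ≤ 2) :
    A ≤ A' ∧ A' + 3 * D ≤ A + 3 * D' := by
  obtain ⟨m, rfl⟩ := hdvd
  have hm : 0 < m := by
    rcases Nat.eq_zero_or_pos m with h0 | h
    · subst h0; simp at hD'
    · exact h
  have eA : A = D * (A / D) + A % D := (Nat.div_add_mod A D).symm
  have eA' : A' = (D * m) * (A / D) + A' % (D * m) := by
    rw [hdiv]; exact (Nat.div_add_mod A' (D * m)).symm
  have hr'2 : (A' % (D * m)) % D = A % D := by
    rw [Nat.mod_mod_of_dvd A' ⟨m, rfl⟩, hmod]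
  have er' : A' % (D * m) = D * ((A' % (D * m)) / D) + A % D := by
    conv_lhs => rw [← Nat.div_add_mod (A' % (D * m)) D]
    rw [hr'2]
  have hr'1 : A' % (D * m) < D * m := Nat.mod_lt _ (by positivity)
  have hqm : (A' % (D * m)) / D + 1 ≤ m := by
    have h1 : D * ((A' % (D * m)) / D) < D * m := by omega
    have := Nat.lt_of_mul_lt_mul_left h1
    omega
  exact sigma_lin hD hm hs2 eA eA' er' hqm

private lemma sigma_le_two {Δ v l j : ℕ} (hΔ : 0 < Δ) (hj : 1 ≤ j)
    (h1 : Δ * (j - 2) * 2 ^ l + 1 ≤ v) (h2 : v ≤ Δ * (j + 1) * 2 ^ l) :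
    (Δ * (j + 1) * 2 ^ l - v) / (Δ * 2 ^ l) ≤ 2 := by
  have hD : 0 < Δ * 2 ^ l := by positivity
  have hlt : Δ * (j + 1) * 2 ^ l - v < 3 * (Δ * 2 ^ l) := by
    rcases Nat.lt_or_ge j 2 with hj2 | hj2
    · have hj1 : j = 1 := by omega
      subst hj1
      have e1 : Δ * (1 + 1) * 2 ^ l = 2 * (Δ * 2 ^ l) := by ring
      have hv1 : 1 ≤ v := by
        have : Δ * (1 - 2) * 2 ^ l = 0 := by norm_num
        omega
      omega
    · have e1 : Δ * (j + 1) * 2 ^ l = Δ * (j - 2) * 2 ^ l + 3 * (Δ * 2 ^ l) := by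
        have hj3 : j + 1 = (j - 2) + 3 := by omega
        rw [hj3]; ring
      omega
  have := (Nat.div_lt_iff_lt_mul hD).2 hlt
  omega

end AuxGeom

section AuxGeom2

private lemma nbhd_subset {n Δ v : ℕ} (hΔ : 0 < Δ) {I I' : Ivl} (hll : I.1 ≤ I'.1)
    (hj : 1 ≤ I.2) (hj' : 1 ≤ I'.2)
    (h1 : Δ * (I.2 - 2) * 2 ^ I.1 + 1 ≤ v) (h2 : v ≤ Δ * (I.2 + 1) * 2 ^ I.1)
    (h1' : Δ * (I'.2 - 2) * 2 ^ I'.1 + 1 ≤ v) (h2' : v ≤ Δ * (I'.2 + 1) * 2 ^ I'.1)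
    (hσ : (Δ * (I.2 + 1) * 2 ^ I.1 - v) / (Δ * 2 ^ I.1)
        = (Δ * (I'.2 + 1) * 2 ^ I'.1 - v) / (Δ * 2 ^ I'.1)) :
    nbhdNodes n Δ I ⊆ nbhdNodes n Δ I' := by
  obtain ⟨l, j⟩ := I
  obtain ⟨l', j'⟩ := I'
  simp only at hll hj hj' h1 h2 h1' h2' hσ
  have hD : 0 < Δ * 2 ^ l := by positivity
  have hD' : 0 < Δ * 2 ^ l' := by positivity
  have hdvd : Δ * 2 ^ l ∣ Δ * 2 ^ l' := by
    refine ⟨2 ^ (l' - l), ?_⟩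
    rw [mul_assoc, ← pow_add, Nat.add_sub_cancel' hll]
  -- abbreviations
  have eAv : (Δ * (j + 1) * 2 ^ l - v) + v = (j + 1) * (Δ * 2 ^ l) := by
    have e : Δ * (j + 1) * 2 ^ l = (j + 1) * (Δ * 2 ^ l) := by ring
    omega
  have eAv' : (Δ * (j' + 1) * 2 ^ l' - v) + v = (j' + 1) * (Δ * 2 ^ l') := by
    have e : Δ * (j' + 1) * 2 ^ l' = (j' + 1) * (Δ * 2 ^ l') := by ring
    omega
  have hmod : (Δ * (j + 1) * 2 ^ l - v) % (Δ * 2 ^ l)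
      = (Δ * (j' + 1) * 2 ^ l' - v) % (Δ * 2 ^ l) := by
    have m1 : ((Δ * (j + 1) * 2 ^ l - v) + v) % (Δ * 2 ^ l) = 0 := by
      rw [eAv]; exact Nat.mul_mod_left _ _
    have m2 : ((Δ * (j' + 1) * 2 ^ l' - v) + v) % (Δ * 2 ^ l) = 0 := by
      rw [eAv']
      obtain ⟨c, hc⟩ := hdvd
      rw [hc]
      have : (j' + 1) * (Δ * 2 ^ l * c) = ((j' + 1) * c) * (Δ * 2 ^ l) := by ring
      rw [this]; exact Nat.mul_mod_left _ _
    have hME : ((Δ * (j + 1) * 2 ^ l - v) + v) % (Δ * 2 ^ l)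
        = ((Δ * (j' + 1) * 2 ^ l' - v) + v) % (Δ * 2 ^ l) := by rw [m1, m2]
    exact Nat.ModEq.add_right_cancel' v hME
  have hs2 : (Δ * (j + 1) * 2 ^ l - v) / (Δ * 2 ^ l) ≤ 2 := sigma_le_two hΔ hj h1 h2
  obtain ⟨hAle, hA3⟩ := sigma_core hD hD' hdvd hmod hσ hs2
  -- upper bound
  have hupper : Δ * (j + 1) * 2 ^ l ≤ Δ * (j' + 1) * 2 ^ l' := by omega
  -- lower bound
  have hlower : Δ * (j' - 2) * 2 ^ l' ≤ Δ * (j - 2) * 2 ^ l := by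
    have hsum : (j' + 1) * (Δ * 2 ^ l') + 3 * (Δ * 2 ^ l)
        ≤ (j + 1) * (Δ * 2 ^ l) + 3 * (Δ * 2 ^ l') := by omega
    rcases Nat.lt_or_ge j' 3 with hj'3 | hj'3
    · have : j' - 2 = 0 := by omega
      rw [this]; simp
    · have e' : (j' + 1) * (Δ * 2 ^ l') = (j' - 2) * (Δ * 2 ^ l') + 3 * (Δ * 2 ^ l') := by
        have h3 : j' + 1 = (j' - 2) + 3 := by omega
        rw [h3, add_mul]
      rcases Nat.lt_or_ge j 3 with hj3 | hj3
      · exfalso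
        have hle3 : (j + 1) * (Δ * 2 ^ l) ≤ 3 * (Δ * 2 ^ l) :=
          Nat.mul_le_mul_right _ (by omega)
        have : (j' - 2) * (Δ * 2 ^ l') ≤ 0 := by omega
        have hpos : 0 < (j' - 2) * (Δ * 2 ^ l') := by
          apply Nat.mul_pos (by omega) hD'
        omega
      · have e : (j + 1) * (Δ * 2 ^ l) = (j - 2) * (Δ * 2 ^ l) + 3 * (Δ * 2 ^ l) := by
          have h3 : j + 1 = (j - 2) + 3 := by omega
          rw [h3, add_mul]
        have goal' : (j' - 2) * (Δ * 2 ^ l') ≤ (j - 2) * (Δ * 2 ^ l) := by omega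
        calc Δ * (j' - 2) * 2 ^ l' = (j' - 2) * (Δ * 2 ^ l') := by ring
          _ ≤ (j - 2) * (Δ * 2 ^ l) := goal'
          _ = Δ * (j - 2) * 2 ^ l := by ring
  -- conclude
  unfold nbhdNodes
  apply Finset.Icc_subset_Icc
  · simp only
    omega
  · simp only
    exact min_le_min (le_refl n) hupper

private lemma sigma_inj {Δ v : ℕ} (hΔ : 0 < Δ) {I I' : Ivl} (hll : I.1 = I'.1)
    (hj : 1 ≤ I.2) (hj' : 1 ≤ I'.2)
    (h1 : Δ * (I.2 - 2) * 2 ^ I.1 + 1 ≤ v) (h2 : v ≤ Δ * (I.2 + 1) * 2 ^ I.1)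
    (h1' : Δ * (I'.2 - 2) * 2 ^ I'.1 + 1 ≤ v) (h2' : v ≤ Δ * (I'.2 + 1) * 2 ^ I'.1)
    (hσ : (Δ * (I.2 + 1) * 2 ^ I.1 - v) / (Δ * 2 ^ I.1)
        = (Δ * (I'.2 + 1) * 2 ^ I'.1 - v) / (Δ * 2 ^ I'.1)) :
    I = I' := by
  obtain ⟨l, j⟩ := I
  obtain ⟨l', j'⟩ := I'
  simp only at hll hj hj' h1 h2 h1' h2' hσ
  subst hll
  have hD : 0 < Δ * 2 ^ l := by positivity
  have hmod : (Δ * (j + 1) * 2 ^ l - v) % (Δ * 2 ^ l)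
      = (Δ * (j' + 1) * 2 ^ l - v) % (Δ * 2 ^ l) := by
    have m1 : ((Δ * (j + 1) * 2 ^ l - v) + v) % (Δ * 2 ^ l) = 0 := by
      have e : Δ * (j + 1) * 2 ^ l = (j + 1) * (Δ * 2 ^ l) := by ring
      have : (Δ * (j + 1) * 2 ^ l - v) + v = (j + 1) * (Δ * 2 ^ l) := by omega
      rw [this]; exact Nat.mul_mod_left _ _
    have m2 : ((Δ * (j' + 1) * 2 ^ l - v) + v) % (Δ * 2 ^ l) = 0 := by
      have e : Δ * (j' + 1) * 2 ^ l = (j' + 1) * (Δ * 2 ^ l) := by ring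
      have : (Δ * (j' + 1) * 2 ^ l - v) + v = (j' + 1) * (Δ * 2 ^ l) := by omega
      rw [this]; exact Nat.mul_mod_left _ _
    have hME : ((Δ * (j + 1) * 2 ^ l - v) + v) % (Δ * 2 ^ l)
        = ((Δ * (j' + 1) * 2 ^ l - v) + v) % (Δ * 2 ^ l) := by rw [m1, m2]
    exact Nat.ModEq.add_right_cancel' v hME
  have c1 := sigma_core hD hD dvd_rfl hmod hσ (sigma_le_two hΔ hj h1 h2)
  have c2 := sigma_core hD hD dvd_rfl hmod.symm hσ.symm (sigma_le_two hΔ hj' h1' h2')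
  have hA : Δ * (j + 1) * 2 ^ l - v = Δ * (j' + 1) * 2 ^ l - v := le_antisymm c1.1 c2.1
  clear c1 c2 hmod hσ
  have e : j + 1 = j' + 1 := by
    have e1 : Δ * (j + 1) * 2 ^ l = (j + 1) * (Δ * 2 ^ l) := by ring
    have e2 : Δ * (j' + 1) * 2 ^ l = (j' + 1) * (Δ * 2 ^ l) := by ring
    rw [e1] at hA h2
    rw [e2] at hA h2'
    have e3 : (j + 1) * (Δ * 2 ^ l) = (j' + 1) * (Δ * 2 ^ l) := by omega
    exact Nat.eq_of_mul_eq_mul_right hD e3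
  have hjj : j = j' := by omega
  rw [hjj]

end AuxGeom2

section AuxBins

lemma mem_lineBins_elim {n Δ : ℕ} {R : List (ℕ × ℕ)} {serve : ℕ → ℕ × ℕ}
    {CL : ℕ → List Ivl} {b : Ivl × ℕ} (h : b ∈ lineBins n Δ R serve CL) :
    0 < b.1.1 ∧ ∃ τ, τ ≤ lastT R ∧ b.1 ∈ CL τ ∧ b.2 = tminus n Δ R serve b.1 τ := by
  classical
  unfold lineBins at h
  obtain ⟨p, hp, he⟩ := Finset.mem_image.1 h
  obtain ⟨hpc, hpos⟩ := Finset.mem_filter.1 hp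
  unfold commitSet at hpc
  obtain ⟨τ, hτ, hI⟩ := Finset.mem_biUnion.1 hpc
  obtain ⟨I, hIl, hIe⟩ := Finset.mem_image.1 hI
  subst he
  have h1 : p.1 = I := by rw [← hIe]
  have h2 : p.2 = τ := by rw [← hIe]
  refine ⟨hpos, τ, ?_, ?_, ?_⟩
  · have := Finset.mem_range.1 hτ; omega
  · rw [h1] at *; exact List.mem_toFinset.1 hIl
  · rw [h1, h2]

lemma payer_elim {n Δ : ℕ} {R : List (ℕ × ℕ)} {serve : ℕ → ℕ × ℕ}
    {CL : ℕ → List Ivl} {b : Ivl × ℕ} {v t : ℕ}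
    (h : (v, t) ∈ payer n Δ R serve CL b) :
    v ∈ nbhdNodes n Δ b.1 ∧
      (isLastBin n Δ R serve CL b → t ≤ firstBase n Δ R serve b.1) ∧
      (¬ isLastBin n Δ R serve CL b → b.2 ≤ t ∧ t ≤ tplusN n Δ R serve b.1 b.2) := by
  classical
  by_cases hL : isLastBin n Δ R serve CL b
  · unfold payer at h
    rw [if_pos hL] at h
    obtain ⟨hv, ht⟩ := Finset.mem_product.1 h
    exact ⟨hv, fun _ => (Finset.mem_Icc.1 ht).2, fun hc => absurd hL hc⟩
  · unfold payer at h
    rw [if_neg hL] at h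
    obtain ⟨hv, ht⟩ := Finset.mem_product.1 h
    exact ⟨hv, fun hc => absurd hc hL, fun _ => Finset.mem_Icc.1 ht⟩

lemma mem_nbhd_elim {n Δ v : ℕ} {I : Ivl} (h : v ∈ nbhdNodes n Δ I) :
    Δ * (I.2 - 2) * 2 ^ I.1 + 1 ≤ v ∧ v ≤ Δ * (I.2 + 1) * 2 ^ I.1 := by
  unfold nbhdNodes at h
  have := Finset.mem_Icc.1 h
  exact ⟨this.1, le_trans this.2 (min_le_right _ _)⟩

end AuxBins

section AuxCount

set_option maxHeartbeats 2000000 in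
private lemma count_point_bound (n Δ k r0 : ℕ) (R : List (ℕ × ℕ))
    (hΔ : 2 ≤ Δ) (e : LineonExec n Δ k r0 R) (v t : ℕ) :
    ((lineBins n Δ R e.tri.serve e.commitList).filter fun b =>
        (v, t) ∈ payer n Δ R e.tri.serve e.commitList b).card ≤ 6 * k + 3 := by
  classical
  have hΔ0 : 0 < Δ := by omega
  set B := (lineBins n Δ R e.tri.serve e.commitList).filter
    (fun b => (v, t) ∈ payer n Δ R e.tri.serve e.commitList b) with hBdef
  have hmemB : ∀ b ∈ B, b ∈ lineBins n Δ R e.tri.serve e.commitList ∧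
      (v, t) ∈ payer n Δ R e.tri.serve e.commitList b := by
    intro b hb
    exact ⟨(Finset.mem_filter.1 hb).1, (Finset.mem_filter.1 hb).2⟩
  have hfacts : ∀ b ∈ B, 0 < b.1.1 ∧ b.1.1 ≤ k ∧ 1 ≤ b.1.2 ∧
      Δ * (b.1.2 - 2) * 2 ^ b.1.1 + 1 ≤ v ∧ v ≤ Δ * (b.1.2 + 1) * 2 ^ b.1.1 := by
    intro b hb
    obtain ⟨hLB, hpay⟩ := hmemB b hb
    obtain ⟨hpos, τ, hτ, hCL, -⟩ := mem_lineBins_elim hLB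
    have hval := e.commit_valid τ b.1 hCL
    have hnb := mem_nbhd_elim (payer_elim hpay).1
    exact ⟨hpos, hval.1, hval.2.1, hnb.1, hnb.2⟩
  have base_of_ne : ∀ (I : Ivl) (s : ℕ), (I, s) ∈ B → s ≠ 0 →
      s ∈ baseTimes n Δ R e.tri.serve I := by
    intro I s hb hne
    obtain ⟨-, τ, -, -, he⟩ := mem_lineBins_elim (hmemB _ hb).1
    have he' : s = tminus n Δ R e.tri.serve I τ := he
    rw [he'] at hne ⊢
    exact (tminus_mem_baseTimes hne).1
  -- fiberwise analysis
  have fiber : ∀ I : Ivl, (B.filter (fun b => b.1 = I)).card ≤ 3 ∧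
      (3 ≤ (B.filter (fun b => b.1 = I)).card → I ∈ e.commitList t) := by
    intro I
    set F := B.filter (fun b => b.1 = I) with hFdef
    have hFB : ∀ b ∈ F, b ∈ B ∧ b.1 = I := by
      intro b hb; exact ⟨(Finset.mem_filter.1 hb).1, (Finset.mem_filter.1 hb).2⟩
    set Fs := F.image Prod.snd with hFsdef
    have hFsB : ∀ s ∈ Fs, (I, s) ∈ B := by
      intro s hs
      obtain ⟨b, hb, he⟩ := Finset.mem_image.1 hs
      obtain ⟨hbB, hbI⟩ := hFB b hb
      have hbe : b = (I, s) := by rw [← hbI, ← he]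
      rwa [← hbe]
    have hcards : F.card = Fs.card := by
      rw [hFsdef]
      refine (Finset.card_image_of_injOn ?_).symm
      intro b hb b' hb' hsnd
      have h1 := (hFB b (Finset.mem_coe.1 hb)).2
      have h2 := (hFB b' (Finset.mem_coe.1 hb')).2
      exact Prod.ext (h1.trans h2.symm) hsnd
    set NLs := Fs.filter (fun s => ¬ isLastBin n Δ R e.tri.serve e.commitList (I, s))
      with hNLdef
    set Ls := Fs.filter (fun s => isLastBin n Δ R e.tri.serve e.commitList (I, s))
      with hLdef
    have hsplitc : Ls.card + NLs.card = Fs.card := by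
      rw [hLdef, hNLdef]
      exact Finset.card_filter_add_card_filter_not _
    have hLs1 : Ls.card ≤ 1 := by
      refine Finset.card_le_one.2 ?_
      intro s hs s' hs'
      have h1 := (Finset.mem_filter.1 hs).2
      have h2 := (Finset.mem_filter.1 hs').2
      have m1 := (hmemB _ (hFsB s (Finset.mem_filter.1 hs).1)).1
      have m2 := (hmemB _ (hFsB s' (Finset.mem_filter.1 hs').1)).1
      have a1 : s' ≤ s := h1 (I, s') m2 rfl
      have a2 : s ≤ s' := h2 (I, s) m1 rfl
      omega
    have pairT : ∀ s ∈ NLs, ∀ s' ∈ NLs, s < s' → s' = t := by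
      intro s hs s' hs' hlt
      have hsB := hFsB s (Finset.mem_filter.1 hs).1
      have hs'B := hFsB s' (Finset.mem_filter.1 hs').1
      have hNL := (Finset.mem_filter.1 hs).2
      have hNL' := (Finset.mem_filter.1 hs').2
      have hp : s ≤ t ∧ t ≤ tplusN n Δ R e.tri.serve I s :=
        (payer_elim (hmemB _ hsB).2).2.2 hNL
      have hp' : s' ≤ t ∧ t ≤ tplusN n Δ R e.tri.serve I s' :=
        (payer_elim (hmemB _ hs'B).2).2.2 hNL'
      have hsbase : s' ∈ baseTimes n Δ R e.tri.serve I :=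
        base_of_ne I s' hs'B (by omega)
      have := tplusN_le_of_base hsbase hlt
      omega
    have hNL2 : NLs.card ≤ 2 := by
      by_contra hc
      have hne : NLs.Nonempty := Finset.card_pos.1 (by omega)
      have hsub : NLs ⊆ insert (NLs.min' hne) {t} := by
        intro s hs
        rcases eq_or_ne s (NLs.min' hne) with he | hne'
        · simp [he]
        · have hlt : NLs.min' hne < s := lt_of_le_of_ne (NLs.min'_le s hs) (Ne.symm hne')
          have := pairT _ (NLs.min'_mem hne) s hs hlt
          simp [this]
      have h1 := Finset.card_le_card hsub
      have h2 : (insert (NLs.min' hne) ({t} : Finset ℕ)).card ≤ 2 := by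
        refine le_trans (Finset.card_insert_le _ _) ?_
        simp
      omega
    constructor
    · omega
    · intro h3
      have hFs3 : Fs.card = 3 := by omega
      have hNLs2 : NLs.card = 2 := by omega
      have hLs1' : Ls.card = 1 := by omega
      have hneNL : NLs.Nonempty := Finset.card_pos.1 (by omega)
      obtain ⟨a, ha, b2, hb2, hab⟩ := Finset.one_lt_card.1 (by omega : 1 < NLs.card)
      have hs2 : ∃ s₂ ∈ NLs, s₂ ≠ NLs.min' hneNL := by
        rcases eq_or_ne a (NLs.min' hneNL) with he | hne'
        · exact ⟨b2, hb2, by rw [← he]; exact Ne.symm hab⟩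
        · exact ⟨a, ha, hne'⟩
      obtain ⟨s₂, hs₂, hs₂m⟩ := hs2
      have hmlt : NLs.min' hneNL < s₂ :=
        lt_of_le_of_ne (NLs.min'_le s₂ hs₂) (Ne.symm hs₂m)
      have hs₂t : s₂ = t := pairT _ (NLs.min'_mem hneNL) s₂ hs₂ hmlt
      have htbase : t ∈ baseTimes n Δ R e.tri.serve I := by
        have := base_of_ne I s₂ (hFsB s₂ (Finset.mem_filter.1 hs₂).1) (by omega)
        rwa [hs₂t] at this
      have hfb_le : firstBase n Δ R e.tri.serve I ≤ t := firstBase_le_of_base htbase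
      obtain ⟨sL, hsL⟩ := Finset.card_pos.1 (by omega : 0 < Ls.card)
      have hsLlast := (Finset.mem_filter.1 hsL).2
      have hsLB := hFsB sL (Finset.mem_filter.1 hsL).1
      have hle : t ≤ firstBase n Δ R e.tri.serve I :=
        (payer_elim (hmemB _ hsLB).2).2.1 hsLlast
      have hm0 : NLs.min' hneNL = 0 := by
        by_contra hm0
        have hmbase := base_of_ne I _ (hFsB _ (Finset.mem_filter.1 (NLs.min'_mem hneNL)).1) hm0
        have := firstBase_le_of_base hmbase
        omega
      have hmB : (I, NLs.min' hneNL) ∈ B :=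
        hFsB _ (Finset.mem_filter.1 (NLs.min'_mem hneNL)).1
      obtain ⟨-, τ₀, hτ₀last, hτ₀CL, hτ₀e⟩ := mem_lineBins_elim (hmemB _ hmB).1
      have hτ₀e' : NLs.min' hneNL = tminus n Δ R e.tri.serve I τ₀ := hτ₀e
      have hnolt : ∀ x ∈ baseTimes n Δ R e.tri.serve I, ¬ x < τ₀ := by
        intro x hx hxlt
        have hne2 : ((baseTimes n Δ R e.tri.serve I).filter fun τ' => τ' < τ₀).Nonempty :=
          ⟨x, Finset.mem_filter.2 ⟨hx, hxlt⟩⟩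
        obtain ⟨b3, hb3, he3⟩ := Finset.exists_mem_eq_sup _ hne2 id
        have hb3' := Finset.mem_filter.1 hb3
        have htm : tminus n Δ R e.tri.serve I τ₀ = b3 := by
          unfold tminus; rw [he3]; rfl
        have hb30 : b3 = 0 := by omega
        have h0base : (0 : ℕ) ∈ baseTimes n Δ R e.tri.serve I := by
          rw [← hb30]; exact hb3'.1
        have := firstBase_le_of_base h0base
        omega
      obtain ⟨p, hp, hpN, hp1, hp2⟩ := e.commit_stay τ₀ I hτ₀CL
      have hpbase : p.2 ∈ baseTimes n Δ R e.tri.serve I := by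
        unfold baseTimes
        exact Finset.mem_image.2 ⟨p, Finset.mem_filter.2 ⟨hp, hpN⟩, rfl⟩
      have hpeq : p.2 = τ₀ := by
        have := hnolt p.2 hpbase
        omega
      have hτ₀base : τ₀ ∈ baseTimes n Δ R e.tri.serve I := by rwa [hpeq] at hpbase
      have h1 := firstBase_le_of_base hτ₀base
      have h2 := hnolt _ (firstBase_mem ⟨τ₀, hτ₀base⟩)
      have hτ₀t : τ₀ = t := by omega
      rw [← hτ₀t]
      exact hτ₀CL
  -- global counting
  set P := B.image Prod.fst with hPdef
  have card_eq : B.card = ∑ I ∈ P, (B.filter (fun b => b.1 = I)).card :=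
    Finset.card_eq_sum_card_fiberwise (fun b hb => Finset.mem_image_of_mem _ hb)
  set T := P.filter (fun I => 3 ≤ (B.filter (fun b => b.1 = I)).card) with hTdef
  have hPfacts : ∀ I ∈ P, 0 < I.1 ∧ I.1 ≤ k ∧ 1 ≤ I.2 ∧
      Δ * (I.2 - 2) * 2 ^ I.1 + 1 ≤ v ∧ v ≤ Δ * (I.2 + 1) * 2 ^ I.1 := by
    intro I hI
    obtain ⟨b, hb, he⟩ := Finset.mem_image.1 hI
    have := hfacts b hb
    rw [← he]
    exact this
  have step : B.card ≤ 2 * P.card + T.card := by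
    rw [card_eq]
    have hle : ∀ I ∈ P, (B.filter (fun b => b.1 = I)).card
        ≤ 2 + (if 3 ≤ (B.filter (fun b => b.1 = I)).card then 1 else 0) := by
      intro I _
      have h3 := (fiber I).1
      by_cases hc : 3 ≤ (B.filter (fun b => b.1 = I)).card
      · rw [if_pos hc]; omega
      · rw [if_neg hc]; omega
    calc ∑ I ∈ P, (B.filter (fun b => b.1 = I)).card
        ≤ ∑ I ∈ P, (2 + if 3 ≤ (B.filter (fun b => b.1 = I)).card then 1 else 0) :=
          Finset.sum_le_sum hle
      _ = ∑ _I ∈ P, 2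
          + ∑ I ∈ P, (if 3 ≤ (B.filter (fun b => b.1 = I)).card then 1 else 0) :=
          Finset.sum_add_distrib
      _ = 2 * P.card + T.card := by
          rw [Finset.sum_const, smul_eq_mul, hTdef, Finset.card_filter]
          ring
  have hPcard : P.card ≤ 3 * k := by
    have hinj : P.card ≤ ((Finset.Icc 1 k) ×ˢ (Finset.range 3)).card := by
      apply Finset.card_le_card_of_injOn
        (fun I => (I.1, (Δ * (I.2 + 1) * 2 ^ I.1 - v) / (Δ * 2 ^ I.1)))
      · intro I hI
        obtain ⟨hpos, hk, hj, h1, h2⟩ := hPfacts I hI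
        refine Finset.mem_product.2 ⟨Finset.mem_Icc.2 ⟨hpos, hk⟩, Finset.mem_range.2 ?_⟩
        have := sigma_le_two hΔ0 hj h1 h2
        dsimp only
        omega
      · intro I hI I' hI' hfe
        rw [Finset.mem_coe] at hI hI'
        obtain ⟨-, -, hj, h1, h2⟩ := hPfacts I hI
        obtain ⟨-, -, hj', h1', h2'⟩ := hPfacts I' hI'
        have hfe' : (I.1, (Δ * (I.2 + 1) * 2 ^ I.1 - v) / (Δ * 2 ^ I.1))
            = (I'.1, (Δ * (I'.2 + 1) * 2 ^ I'.1 - v) / (Δ * 2 ^ I'.1)) := hfe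
        injection hfe' with hfe1 hfe2
        exact sigma_inj hΔ0 hfe1 hj hj' h1 h2 h1' h2' hfe2
    have hc : ((Finset.Icc 1 k) ×ˢ (Finset.range 3)).card = k * 3 := by
      rw [Finset.card_product, Nat.card_Icc, Finset.card_range]
      omega
    omega
  have key : ∀ I I' : Ivl, I ∈ e.commitList t → I' ∈ e.commitList t →
      1 ≤ I.2 → 1 ≤ I'.2 →
      Δ * (I.2 - 2) * 2 ^ I.1 + 1 ≤ v → v ≤ Δ * (I.2 + 1) * 2 ^ I.1 →
      Δ * (I'.2 - 2) * 2 ^ I'.1 + 1 ≤ v → v ≤ Δ * (I'.2 + 1) * 2 ^ I'.1 →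
      I.1 < I'.1 →
      (Δ * (I.2 + 1) * 2 ^ I.1 - v) / (Δ * 2 ^ I.1)
        = (Δ * (I'.2 + 1) * 2 ^ I'.1 - v) / (Δ * 2 ^ I'.1) → False := by
    intro I I' hICL hI'CL hj hj' h1 h2 h1' h2' hlt hσe
    have hsub := nbhd_subset (n := n) hΔ0 (le_of_lt hlt) hj hj' h1 h2 h1' h2' hσe
    obtain ⟨l₁, l₂, hsplitL⟩ := List.append_of_mem hI'CL
    have hIl₁ : I ∈ l₁ := by
      have hI2 : I ∈ l₁ ++ I' :: l₂ := by rw [← hsplitL]; exact hICL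
      rcases List.mem_append.1 hI2 with h | h
      · exact h
      · rcases List.mem_cons.1 h with h' | h'
        · exfalso; rw [h'] at hlt; omega
        · exfalso
          have hsort := e.commit_sorted t
          rw [hsplitL, List.map_append, List.map_cons] at hsort
          have hp2 := (List.pairwise_append.1 hsort).2.1
          have hp3 := (List.pairwise_cons.1 hp2).1 I.1 (List.mem_map_of_mem (f := Prod.fst) h')
          omega
    have hfresh := e.commit_fresh t l₁ I' l₂ hsplitL (e.sel t I)
      (hsub (e.sel_nbhd t I hICL))
    exact hfresh.2 (List.mem_map_of_mem (f := e.sel t) hIl₁)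
  have hTcard : T.card ≤ 3 := by
    have hinj : T.card ≤ (Finset.range 3).card := by
      apply Finset.card_le_card_of_injOn
        (fun I => (Δ * (I.2 + 1) * 2 ^ I.1 - v) / (Δ * 2 ^ I.1))
      · intro I hI
        have hIP := (Finset.mem_filter.1 hI).1
        obtain ⟨hpos, hk, hj, h1, h2⟩ := hPfacts I hIP
        refine Finset.mem_range.2 ?_
        have := sigma_le_two hΔ0 hj h1 h2
        dsimp only
        omega
      · intro I hI I' hI' hσe
        rw [Finset.mem_coe] at hI hI'
        have hIP := (Finset.mem_filter.1 hI).1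
        have hI'P := (Finset.mem_filter.1 hI').1
        have hICL := (fiber I).2 (Finset.mem_filter.1 hI).2
        have hI'CL := (fiber I').2 (Finset.mem_filter.1 hI').2
        obtain ⟨-, -, hj, h1, h2⟩ := hPfacts I hIP
        obtain ⟨-, -, hj', h1', h2'⟩ := hPfacts I' hI'P
        rcases Nat.lt_trichotomy I.1 I'.1 with hlt | heq | hgt
        · exact absurd (key I I' hICL hI'CL hj hj' h1 h2 h1' h2' hlt hσe) id
        · exact sigma_inj hΔ0 heq hj hj' h1 h2 h1' h2' hσe
        · exact absurd (key I' I hI'CL hICL hj' hj h1' h2' h1 h2 hgt hσe.symm) id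
    simpa using hinj
  omega

end AuxCount

/-- With `Δ ≥ 2`, every horizontal edge of Triangle's solution
lies in the payer of at most `6·log₂ n` bins; consequently
`Σ_{b ∈ BIN} |horbin(b)| ≤ 6·log₂ n·|H^T|`. -/
theorem lineon_horizontal_edge_charged (n Δ k r0 : ℕ) (R : List (ℕ × ℕ))
    (hV : ValidInstance n r0 R) (hΔ : 2 ≤ Δ) (e : LineonExec n Δ k r0 R) :
    (∀ h ∈ triHT R e.tri.addH,
        (((lineBins n Δ R e.tri.serve e.commitList).filter fun b =>
              eVerts h ⊆ payer n Δ R e.tri.serve e.commitList b).card : ℝ) ≤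
          6 * Real.logb 2 n) ∧
      (∑ b ∈ lineBins n Δ R e.tri.serve e.commitList,
          ((horbin n Δ R e.tri.serve e.tri.addH e.commitList b).card : ℝ)) ≤
        6 * Real.logb 2 n * (triHT R e.tri.addH).card := by
  classical
  have hlog : (k : ℝ) + 1 ≤ Real.logb 2 n := by
    have h1 : (2:ℕ) ^ (k + 1) ≤ n := by
      rw [e.hn]
      have h2 : (2:ℕ) ^ (k + 1) = 2 * 2 ^ k := by ring
      rw [h2]
      exact Nat.mul_le_mul_right _ hΔ
    have h2 : ((2:ℝ)) ^ (k + 1) ≤ (n : ℝ) := by exact_mod_cast h1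
    have h3 := Real.logb_le_logb_of_le (by norm_num : (1:ℝ) < 2) (by positivity) h2
    rw [Real.logb_pow, Real.logb_self_eq_one (by norm_num : (1:ℝ) < 2)] at h3
    push_cast at h3
    linarith
  have part1 : ∀ h ∈ triHT R e.tri.addH,
      (((lineBins n Δ R e.tri.serve e.commitList).filter fun b =>
            eVerts h ⊆ payer n Δ R e.tri.serve e.commitList b).card : ℝ) ≤
        6 * Real.logb 2 n := by
    intro h hh
    obtain ⟨v0, t0, hv0⟩ : ∃ v0 t0, (v0, t0) ∈ eVerts h := by
      cases h with
      | h v t => exact ⟨v, t, by simp [eVerts]⟩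
      | a v t => exact ⟨v, t, by simp [eVerts]⟩
    have hsub : (lineBins n Δ R e.tri.serve e.commitList).filter
          (fun b => eVerts h ⊆ payer n Δ R e.tri.serve e.commitList b)
        ⊆ (lineBins n Δ R e.tri.serve e.commitList).filter
          (fun b => (v0, t0) ∈ payer n Δ R e.tri.serve e.commitList b) := by
      intro b hb
      rw [Finset.mem_filter] at hb ⊢
      exact ⟨hb.1, hb.2 hv0⟩
    have hcard := le_trans (Finset.card_le_card hsub)
      (count_point_bound n Δ k r0 R hΔ e v0 t0)
    have hcast : (((lineBins n Δ R e.tri.serve e.commitList).filter fun b =>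
          eVerts h ⊆ payer n Δ R e.tri.serve e.commitList b).card : ℝ)
        ≤ ((6 * k + 3 : ℕ) : ℝ) := by exact_mod_cast hcard
    refine le_trans hcast ?_
    push_cast
    linarith
  refine ⟨part1, ?_⟩
  have swap : ∑ b ∈ lineBins n Δ R e.tri.serve e.commitList,
        (horbin n Δ R e.tri.serve e.tri.addH e.commitList b).card
      = ∑ h ∈ triHT R e.tri.addH,
        ((lineBins n Δ R e.tri.serve e.commitList).filter fun b =>
          eVerts h ⊆ payer n Δ R e.tri.serve e.commitList b).card := by
    unfold horbin
    simp only [Finset.card_filter]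
    rw [Finset.sum_comm]
  calc (∑ b ∈ lineBins n Δ R e.tri.serve e.commitList,
        ((horbin n Δ R e.tri.serve e.tri.addH e.commitList b).card : ℝ))
      = ((∑ b ∈ lineBins n Δ R e.tri.serve e.commitList,
          (horbin n Δ R e.tri.serve e.tri.addH e.commitList b).card : ℕ) : ℝ) := by
        push_cast
        rfl
    _ = ((∑ h ∈ triHT R e.tri.addH,
          ((lineBins n Δ R e.tri.serve e.commitList).filter fun b =>
            eVerts h ⊆ payer n Δ R e.tri.serve e.commitList b).card : ℕ) : ℝ) := by
        rw [swap]
    _ = ∑ h ∈ triHT R e.tri.addH,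
          (((lineBins n Δ R e.tri.serve e.commitList).filter fun b =>
            eVerts h ⊆ payer n Δ R e.tri.serve e.commitList b).card : ℝ) := by
        push_cast
        rfl
    _ ≤ ∑ _h ∈ triHT R e.tri.addH, 6 * Real.logb 2 n := Finset.sum_le_sum part1
    _ = ((triHT R e.tri.addH).card : ℝ) * (6 * Real.logb 2 n) := by
        rw [Finset.sum_const, nsmul_eq_mul]
    _ = 6 * Real.logb 2 n * ((triHT R e.tri.addH).card : ℝ) := by ring
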